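/- arXiv:2401.01370 — 2 statements merged into one kernel-verified Lean document; each statement's English description precedes it below -/
import Mathlib

section
/- Parameter-shift rule for Pauli rotations: if f(θ) = ⟨ψ| R_z(θ)† M R_z(θ) |ψ⟩ for a fixed unit vector ψ ∈ ℂ² and Hermitian 2×2 matrix M, then f'(θ) = (1/2)·(f(θ + π/2) − f(θ − π/2)). -/
open Complex Matrix Real

noncomputable def Rz (δ : ℝ) : Matrix (Fin 2) (Fin 2) ℂ :=
  Matrix.diagonal ![Complex.exp (-Complex.I * (δ / 2)), Complex.exp (Complex.I * (δ / 2))]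

/-- The expectation value f(θ) = ⟨ψ| R_z(θ)† M R_z(θ) |ψ⟩. -/
noncomputable def expectZ (M : Matrix (Fin 2) (Fin 2) ℂ) (ψ : EuclideanSpace ℂ (Fin 2))
    (θ : ℝ) : ℂ :=
  star (ψ : Fin 2 → ℂ) ⬝ᵥ ((Rz θ)ᴴ *ᵥ (M *ᵥ (Rz θ *ᵥ ψ)))

lemma expectZ_eq (M : Matrix (Fin 2) (Fin 2) ℂ) (ψ : EuclideanSpace ℂ (Fin 2)) (θ : ℝ) :
    expectZ M ψ θ =
      (starRingEnd ℂ (ψ 0) * M 0 0 * ψ 0 + starRingEnd ℂ (ψ 1) * M 1 1 * ψ 1)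
      + (starRingEnd ℂ (ψ 0) * M 0 1 * ψ 1) * Complex.exp ((θ : ℂ) * Complex.I)
      + (starRingEnd ℂ (ψ 1) * M 1 0 * ψ 0) * Complex.exp (-((θ : ℂ) * Complex.I)) := by
  have h1 : Complex.exp (Complex.I * θ * (1/2)) * Complex.exp (Complex.I * θ * (-1/2)) = 1 := by
    rw [← Complex.exp_add]; norm_num
  have h2 : Complex.exp (Complex.I * θ * (1/2)) ^ 2 = Complex.exp (Complex.I * (θ:ℂ)) := by
    rw [sq, ← Complex.exp_add]; ring_nf
  have h3 : Complex.exp (Complex.I * θ * (-1/2)) ^ 2 = Complex.exp (-(Complex.I * (θ:ℂ))) := by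
    rw [sq, ← Complex.exp_add]; ring_nf
  simp [expectZ, Rz, mulVec, dotProduct, Matrix.diagonal, Fin.sum_univ_two,
    ← Complex.exp_conj, _root_.map_mul, map_div₀, map_ofNat]
  ring_nf
  linear_combination ((starRingEnd ℂ) (ψ 0) * M 0 0 * ψ 0 + (starRingEnd ℂ) (ψ 1) * M 1 1 * ψ 1) * h1 + ((starRingEnd ℂ) (ψ 0) * M 0 1 * ψ 1) * h2 + ((starRingEnd ℂ) (ψ 1) * M 1 0 * ψ 0) * h3

lemma hasDerivAt_key (A B C : ℂ) (θ : ℝ) :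
    HasDerivAt (fun t : ℝ => A + B * Complex.exp ((t : ℂ) * Complex.I)
        + C * Complex.exp (-((t : ℂ) * Complex.I)))
      (B * Complex.exp ((θ : ℂ) * Complex.I) * Complex.I
        - C * Complex.exp (-((θ : ℂ) * Complex.I)) * Complex.I) θ := by
  have h0 : HasDerivAt (fun t : ℝ => (t : ℂ)) 1 θ := Complex.ofRealCLM.hasDerivAt
  have h1 : HasDerivAt (fun t : ℝ => (t : ℂ) * Complex.I) Complex.I θ := by
    simpa using h0.mul_const Complex.I
  have h2 : HasDerivAt (fun t : ℝ => Complex.exp ((t : ℂ) * Complex.I))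
      (Complex.exp ((θ : ℂ) * Complex.I) * Complex.I) θ := h1.cexp
  have h3 : HasDerivAt (fun t : ℝ => Complex.exp (-((t : ℂ) * Complex.I)))
      (Complex.exp (-((θ : ℂ) * Complex.I)) * (-Complex.I)) θ := h1.neg.cexp
  have := ((hasDerivAt_const θ A).add (h2.const_mul B)).add (h3.const_mul C)
  exact this.congr_deriv (by ring)

lemma exp_shift_pos (θ : ℝ) :
    Complex.exp ((((θ + π/2 : ℝ)) : ℂ) * Complex.I) = Complex.exp ((θ : ℂ) * Complex.I) * Complex.I := by
  have hpi : Complex.exp ((π/2 : ℂ) * Complex.I) = Complex.I := by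
    rw [Complex.exp_mul_I, Complex.cos_pi_div_two, Complex.sin_pi_div_two]; ring
  push_cast
  rw [add_mul, Complex.exp_add, hpi]

lemma exp_shift_neg (θ : ℝ) :
    Complex.exp ((((θ - π/2 : ℝ)) : ℂ) * Complex.I) = Complex.exp ((θ : ℂ) * Complex.I) * (-Complex.I) := by
  have hpi : Complex.exp ((π/2 : ℂ) * Complex.I) = Complex.I := by
    rw [Complex.exp_mul_I, Complex.cos_pi_div_two, Complex.sin_pi_div_two]; ring
  push_cast
  rw [sub_mul, Complex.exp_sub, hpi, div_eq_mul_inv, Complex.inv_I]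


/-- Parameter-shift rule: f'(θ) = (1/2)(f(θ + π/2) − f(θ − π/2)). -/
theorem parameter_shift_rule (M : Matrix (Fin 2) (Fin 2) ℂ) (hM : M.IsHermitian)
    (ψ : EuclideanSpace ℂ (Fin 2)) (hψ : ‖ψ‖ = 1) (θ : ℝ) :
    deriv (expectZ M ψ) θ =
      (1 / 2 : ℂ) * (expectZ M ψ (θ + π / 2) - expectZ M ψ (θ - π / 2)) := by
  set A := starRingEnd ℂ (ψ 0) * M 0 0 * ψ 0 + starRingEnd ℂ (ψ 1) * M 1 1 * ψ 1 with hA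
  set B := starRingEnd ℂ (ψ 0) * M 0 1 * ψ 1 with hB
  set C := starRingEnd ℂ (ψ 1) * M 1 0 * ψ 0 with hC
  have hfun : expectZ M ψ = fun t : ℝ => A + B * Complex.exp ((t : ℂ) * Complex.I)
      + C * Complex.exp (-((t : ℂ) * Complex.I)) := by
    funext t; exact expectZ_eq M ψ t
  rw [hfun, (hasDerivAt_key A B C θ).deriv]
  have e1 := exp_shift_pos θ
  have e2 := exp_shift_neg θ
  have e3 : Complex.exp (-((((θ + π/2 : ℝ)) : ℂ) * Complex.I))
      = Complex.exp (-((θ : ℂ) * Complex.I)) * (-Complex.I) := by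
    rw [Complex.exp_neg, e1, mul_inv, ← Complex.exp_neg, Complex.inv_I, mul_neg]
  have e4 : Complex.exp (-((((θ - π/2 : ℝ)) : ℂ) * Complex.I))
      = Complex.exp (-((θ : ℂ) * Complex.I)) * Complex.I := by
    rw [Complex.exp_neg, e2, mul_inv, ← Complex.exp_neg, inv_neg, Complex.inv_I, neg_neg]
  simp only
  rw [e1, e2, e3, e4]
  ring
end

section
/- The expectation ⟨ψ| R_z(θ)† Z' R_z(θ) |ψ⟩, where Z' is any Hermitian 2×2 matrix and ψ a fixed unit vector, is of the form a + b·cos θ + c·sin θ for some real constants a, b, c depending on ψ and Z'. -/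
/-! `R_z(θ) ψ` only changes the phases of the two components, by `e^{∓iθ/2}`. The Hermitian
form `⟨φ|Z'|φ⟩ = |φ₀|² Z'₀₀ + |φ₁|² Z'₁₁ + 2 Re(φ̄₀ Z'₀₁ φ₁)` therefore keeps its diagonal
part, while its off-diagonal part becomes `2 Re(e^{iθ} ψ̄₀ Z'₀₁ ψ₁)`. -/

open Complex Matrix Real

theorem Matrix.IsHermitian.star_dotProduct_mulVec_fin_two {A : Matrix (Fin 2) (Fin 2) ℂ}
    (hA : A.IsHermitian) (v : Fin 2 → ℂ) :
    star v ⬝ᵥ (A *ᵥ v) =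
      ((normSq (v 0) * (A 0 0).re + normSq (v 1) * (A 1 1).re
        + 2 * (star (v 0) * A 0 1 * v 1).re : ℝ) : ℂ) := by
  have h00 : ((A 0 0).re : ℂ) = A 0 0 := conj_eq_iff_re.mp (hA.apply 0 0)
  have h11 : ((A 1 1).re : ℂ) = A 1 1 := conj_eq_iff_re.mp (hA.apply 1 1)
  have h10 : A 1 0 = star (A 0 1) := hA.apply 1 0 |>.symm
  rw [ofReal_add, ofReal_add, ofReal_mul, ofReal_mul, h00, h11, ← add_conj, ← mul_conj,
    ← mul_conj]
  simp only [dotProduct, mulVec, Fin.sum_univ_two, Pi.star_apply, h10, star_def, map_mul,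
    conj_conj]
  ring

theorem Rz_mulVec_zero (θ : ℝ) (v : Fin 2 → ℂ) :
    (Rz θ *ᵥ v) 0 = exp (↑(-θ / 2) * I) * v 0 := by
  rw [Rz, mulVec_diagonal]; push_cast; ring_nf

theorem Rz_mulVec_one (θ : ℝ) (v : Fin 2 → ℂ) :
    (Rz θ *ᵥ v) 1 = exp (↑(θ / 2) * I) * v 1 := by
  rw [Rz, mulVec_diagonal]; push_cast; ring_nf

theorem normSq_exp_ofReal_mul_I_mul (x : ℝ) (z : ℂ) : normSq (exp (x * I) * z) = normSq z := by
  rw [normSq_mul, normSq_eq_norm_sq, norm_exp_ofReal_mul_I, one_pow, one_mul]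

theorem star_exp_ofReal_mul_I (x : ℝ) : star (exp (x * I)) = exp (↑(-x) * I) := by
  rw [star_def, ← exp_conj]; simp

theorem re_exp_ofReal_mul_I_mul (x : ℝ) (z : ℂ) :
    (exp (x * I) * z).re = z.re * Real.cos x - z.im * Real.sin x := by
  rw [mul_re, exp_ofReal_mul_I_re, exp_ofReal_mul_I_im]; ring

theorem expectation_is_trig_poly_general (Z' : Matrix (Fin 2) (Fin 2) ℂ) (hZ : Z'.IsHermitian)
    (ψ : EuclideanSpace ℂ (Fin 2)) :
    ∃ a b c : ℝ, ∀ θ : ℝ,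
      star (ψ : Fin 2 → ℂ) ⬝ᵥ ((Rz θ)ᴴ *ᵥ (Z' *ᵥ (Rz θ *ᵥ ψ))) =
        ((a + b * Real.cos θ + c * Real.sin θ : ℝ) : ℂ) := by
  set w := star (ψ 0) * Z' 0 1 * ψ 1
  refine ⟨normSq (ψ 0) * (Z' 0 0).re + normSq (ψ 1) * (Z' 1 1).re, 2 * w.re, -2 * w.im,
    fun θ => ?_⟩
  have hphase : star (exp (↑(-θ / 2) * I) * ψ 0) * Z' 0 1 * (exp (↑(θ / 2) * I) * ψ 1)
      = exp (θ * I) * w := by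
    rw [star_mul', star_exp_ofReal_mul_I, neg_div, neg_neg]
    calc _ = exp (↑(θ / 2) * I) * exp (↑(θ / 2) * I) * w := by ring
      _ = _ := by rw [← Complex.exp_add]; push_cast; ring_nf
  rw [dotProduct_mulVec, ← star_mulVec, hZ.star_dotProduct_mulVec_fin_two, Rz_mulVec_zero,
    Rz_mulVec_one, normSq_exp_ofReal_mul_I_mul, normSq_exp_ofReal_mul_I_mul, hphase,
    re_exp_ofReal_mul_I_mul]
  ring_nf

/-- The expectation ⟨ψ| R_z(θ)† Z' R_z(θ) |ψ⟩ for a Hermitian Z' and unit ψ is a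
degree-1 trigonometric polynomial a + b·cos θ + c·sin θ in θ. -/
theorem expectation_is_trig_poly (Z' : Matrix (Fin 2) (Fin 2) ℂ) (hZ : Z'.IsHermitian)
    (ψ : EuclideanSpace ℂ (Fin 2)) (hψ : ‖ψ‖ = 1) :
    ∃ a b c : ℝ, ∀ θ : ℝ,
      star (ψ : Fin 2 → ℂ) ⬝ᵥ ((Rz θ)ᴴ *ᵥ (Z' *ᵥ (Rz θ *ᵥ ψ))) =
        ((a + b * Real.cos θ + c * Real.sin θ : ℝ) : ℂ) :=
  expectation_is_trig_poly_general Z' hZ ψ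
end
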